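/- arXiv:0706.3742 — 3 statements merged into one kernel-verified Lean document; each statement's English description precedes it below -/
import Mathlib

section
/- For any nonnegative integer k, the sum over l ≥ 0 of q^l / ((q;q)_l · (tq;q)_{l+k}) equals (1/((q;q)_∞ · (tq;q)_∞)) · Σ_{m≥0} (-1)^m q^{m(m+1)/2 + km} t^m, as an identity of formal power series in q and t (or analytic functions for |q| < 1). -/
/-!
Euler's identity `(z;q)_∞ = ∑ₘ (-1)ᵐ q^(m(m-1)/2) zᵐ / (q;q)ₘ`, applied to
`1 / (tq;q)_{l+k} = (tq^(l+k+1);q)_∞ / (tq;q)_∞`, turns the left-hand side into an absolutely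
convergent double series over `(l, m)`. Summed over `l` first, the inner series is
`∑ₗ (q^(m+1))ˡ / (q;q)ₗ = 1 / (q^(m+1);q)_∞ = (q;q)ₘ / (q;q)_∞` by Euler's other identity.

Both identities come from the `q`-difference equations `e_q(zq) = (1 - z) e_q(z)` and
`E_q(-z) = (1 - z) E_q(-zq)`: iterating `n` times brings in `(z;q)ₙ`, and as `n → ∞` the series
evaluated at `zqⁿ` tend to their constant term `1` by dominated convergence.
-/

open scoped BigOperators

/-- The finite q-Pochhammer symbol `(a;q)_n`. -/
noncomputable def qPoch (a q : ℂ) : ℕ → ℂ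
  | 0 => 1
  | n + 1 => qPoch a q n * (1 - a * q ^ n)

/-- The infinite q-Pochhammer symbol `(a;q)_∞`. -/
noncomputable def qPochInf (a q : ℂ) : ℂ := ∏' i : ℕ, (1 - a * q ^ i)

open Filter Topology

section QPochhammer

variable {a q : ℂ}

lemma qPoch_eq_prod (a q : ℂ) (n : ℕ) :
    qPoch a q n = ∏ i ∈ Finset.range n, (1 - a * q ^ i) := by
  induction n with
  | zero => rfl
  | succ n ih => rw [qPoch, ih, Finset.prod_range_succ]

lemma summable_norm_mul_pow (a : ℂ) (hq : ‖q‖ < 1) : Summable fun i : ℕ ↦ ‖a * q ^ i‖ := by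
  simpa only [norm_mul, norm_pow] using
    (summable_geometric_of_lt_one (norm_nonneg q) hq).mul_left ‖a‖

lemma multipliable_one_sub_mul_pow (a : ℂ) (hq : ‖q‖ < 1) :
    Multipliable fun i : ℕ ↦ 1 - a * q ^ i := by
  simpa only [sub_eq_add_neg] using
    multipliable_one_add_of_summable (f := fun i : ℕ ↦ -(a * q ^ i))
      (by simpa only [norm_neg] using summable_norm_mul_pow a hq)

lemma tendsto_qPoch (a : ℂ) (hq : ‖q‖ < 1) : Tendsto (qPoch a q) atTop (𝓝 (qPochInf a q)) := by
  simpa only [← qPoch_eq_prod, qPochInf] using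
    (multipliable_one_sub_mul_pow a hq).hasProd.tendsto_prod_nat

lemma qPoch_mul_qPochInf (a : ℂ) (hq : ‖q‖ < 1) (n : ℕ) :
    qPoch a q n * qPochInf (a * q ^ n) q = qPochInf a q := by
  have hshift : (fun i ↦ 1 - a * q ^ n * q ^ i) = fun i ↦ 1 - a * q ^ (i + n) := by
    ext i; ring
  have hm := hshift ▸ multipliable_one_sub_mul_pow (a * q ^ n) hq
  unfold qPochInf
  rw [qPoch_eq_prod, hshift]
  exact Multipliable.prod_mul_tprod_nat_mul' (f := fun i ↦ 1 - a * q ^ i) hm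

lemma norm_mul_pow_le (a : ℂ) (hq : ‖q‖ ≤ 1) (n : ℕ) : ‖a * q ^ n‖ ≤ ‖a‖ := by
  rw [norm_mul, norm_pow]
  exact mul_le_of_le_one_right (norm_nonneg a) (pow_le_one₀ (norm_nonneg q) hq)

lemma norm_mul_pow_lt_one (ha : ‖a‖ < 1) (hq : ‖q‖ ≤ 1) (n : ℕ) : ‖a * q ^ n‖ < 1 :=
  (norm_mul_pow_le a hq n).trans_lt ha

lemma one_sub_mul_pow_ne_zero (ha : ‖a‖ < 1) (hq : ‖q‖ ≤ 1) (n : ℕ) : 1 - a * q ^ n ≠ 0 := by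
  intro h
  simpa [← sub_eq_zero.1 h] using norm_mul_pow_lt_one ha hq n

lemma qPoch_ne_zero (ha : ‖a‖ < 1) (hq : ‖q‖ ≤ 1) (n : ℕ) : qPoch a q n ≠ 0 := by
  rw [qPoch_eq_prod]
  exact Finset.prod_ne_zero_iff.2 fun i _ ↦ one_sub_mul_pow_ne_zero ha hq i

lemma qPochInf_ne_zero (ha : ‖a‖ < 1) (hq : ‖q‖ < 1) : qPochInf a q ≠ 0 := by
  simpa only [qPochInf, sub_eq_add_neg] using
    tprod_one_add_ne_zero_of_summable (f := fun i : ℕ ↦ -(a * q ^ i))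
      (fun i ↦ by simpa only [← sub_eq_add_neg] using one_sub_mul_pow_ne_zero ha hq.le i)
      (by simpa only [norm_neg] using summable_norm_mul_pow a hq)

lemma exists_norm_inv_qPoch_le (ha : ‖a‖ < 1) (hq : ‖q‖ < 1) :
    ∃ C, ∀ n, ‖(qPoch a q n)⁻¹‖ ≤ C := by
  obtain ⟨C, hC⟩ :=
    ((tendsto_qPoch a hq).inv₀ (qPochInf_ne_zero ha hq)).norm.bddAbove_range
  exact ⟨C, fun n ↦ hC ⟨n, rfl⟩⟩

end QPochhammer

section BoundedCoefficients

variable {c : ℕ → ℂ} {C : ℝ} {q z : ℂ}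

lemma norm_mul_pow_le_of_norm_le (hc : ∀ n, ‖c n‖ ≤ C) {r : ℝ} (hz : ‖z‖ ≤ r) (n : ℕ) :
    ‖c n * z ^ n‖ ≤ C * r ^ n := by
  rw [norm_mul, norm_pow]
  exact mul_le_mul (hc n) (pow_le_pow_left₀ (norm_nonneg z) hz n) (by positivity)
    ((norm_nonneg _).trans (hc n))

lemma summable_mul_pow_of_norm_le (hc : ∀ n, ‖c n‖ ≤ C) (hz : ‖z‖ < 1) :
    Summable fun n ↦ c n * z ^ n :=
  .of_norm_bounded ((summable_geometric_of_lt_one (norm_nonneg z) hz).mul_left C)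
    (norm_mul_pow_le_of_norm_le hc le_rfl)

lemma tsum_mul_pow_sub_tsum_mul_pow_mul (hc : ∀ n, ‖c n‖ ≤ C) (hz : ‖z‖ < 1) (hq : ‖q‖ ≤ 1) :
    ∑' n, c n * z ^ n - ∑' n, c n * (z * q) ^ n =
      z * ∑' n, c (n + 1) * (1 - q ^ (n + 1)) * z ^ n := by
  have hzq : ‖z * q‖ < 1 := by simpa using norm_mul_pow_lt_one hz hq 1
  have h₁ := summable_mul_pow_of_norm_le hc hz
  have h₂ := summable_mul_pow_of_norm_le hc hzq
  rw [← h₁.tsum_sub h₂, (h₁.sub h₂).tsum_eq_zero_add, ← tsum_mul_left]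
  simp only [pow_zero, mul_one, sub_self, zero_add]
  exact tsum_congr fun n ↦ by ring

lemma tendsto_tsum_mul_mul_pow_pow (hc : ∀ n, ‖c n‖ ≤ C) (hz : ‖z‖ < 1) (hq : ‖q‖ < 1) :
    Tendsto (fun j : ℕ ↦ ∑' n, c n * (z * q ^ j) ^ n) atTop (𝓝 (c 0)) := by
  have hzero : Tendsto (fun j : ℕ ↦ z * q ^ j) atTop (𝓝 0) := by
    simpa using (tendsto_pow_atTop_nhds_zero_of_norm_lt_one hq).const_mul z
  have := tendsto_tsum_of_dominated_convergence
    ((summable_geometric_of_lt_one (norm_nonneg z) hz).mul_left C)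
    (fun n ↦ (hzero.pow n).const_mul (c n))
    (.of_forall fun j ↦ norm_mul_pow_le_of_norm_le hc (norm_mul_pow_le z hq.le j))
  rwa [tsum_eq_single 0 fun n hn ↦ by simp [zero_pow hn], pow_zero, mul_one] at this

lemma summable_mul_pow_mul_mul_pow {d : ℕ → ℂ} {D : ℝ} {x y : ℂ} {w : ℕ → ℂ}
    (hc : ∀ n, ‖c n‖ ≤ C) (hd : ∀ n, ‖d n‖ ≤ D) (hx : ‖x‖ < 1) (hy : ‖y‖ < 1)
    (hw : ∀ l, ‖w l‖ ≤ ‖y‖) :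
    Summable fun p : ℕ × ℕ ↦ c p.1 * x ^ p.1 * (d p.2 * w p.1 ^ p.2) := by
  have hC : 0 ≤ C := (norm_nonneg _).trans (hc 0)
  have hD : 0 ≤ D := (norm_nonneg _).trans (hd 0)
  refine .of_norm_bounded (g := fun p : ℕ × ℕ ↦ C * ‖x‖ ^ p.1 * (D * ‖y‖ ^ p.2))
    (.mul_of_nonneg ((summable_geometric_of_lt_one (norm_nonneg x) hx).mul_left C)
      ((summable_geometric_of_lt_one (norm_nonneg y) hy).mul_left D)
      (fun _ ↦ by positivity) (fun _ ↦ by positivity)) fun p ↦ ?_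
  rw [norm_mul]
  exact mul_le_mul (norm_mul_pow_le_of_norm_le hc le_rfl p.1)
    (norm_mul_pow_le_of_norm_le hd (hw p.1) p.2) (norm_nonneg _) (by positivity)

end BoundedCoefficients

section Euler

variable {q z : ℂ}

/-- Euler's `q`-exponential `e_q(z) = ∑ zⁿ / (q;q)ₙ`. -/
noncomputable def qExp (q z : ℂ) : ℂ := ∑' n, (qPoch q q n)⁻¹ * z ^ n

noncomputable def qExpInvCoeff (q : ℂ) (n : ℕ) : ℂ :=
  (-1) ^ n * q ^ (n * (n - 1) / 2) * (qPoch q q n)⁻¹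

/-- `E_q(-z) = ∑ (-1)ⁿ q^(n(n-1)/2) zⁿ / (q;q)ₙ`, the inverse of `e_q(z)`. -/
noncomputable def qExpInv (q z : ℂ) : ℂ := ∑' n, qExpInvCoeff q n * z ^ n

lemma qPoch_succ_inv_mul (hq : ‖q‖ < 1) (n : ℕ) :
    (qPoch q q (n + 1))⁻¹ * (1 - q ^ (n + 1)) = (qPoch q q n)⁻¹ := by
  rw [qPoch, pow_succ', mul_inv, inv_mul_cancel_right₀ (one_sub_mul_pow_ne_zero hq hq.le n)]

lemma qExpInvCoeff_succ_mul (hq : ‖q‖ < 1) (n : ℕ) :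
    qExpInvCoeff q (n + 1) * (1 - q ^ (n + 1)) = -(qExpInvCoeff q n * q ^ n) := by
  rw [qExpInvCoeff, qExpInvCoeff, Nat.triangle_succ, ← qPoch_succ_inv_mul hq n]
  ring

lemma qExpInvCoeff_mul_qPoch (hq : ‖q‖ < 1) (n : ℕ) :
    qExpInvCoeff q n * qPoch q q n = (-1) ^ n * q ^ (n * (n - 1) / 2) := by
  rw [qExpInvCoeff, inv_mul_cancel_right₀ (qPoch_ne_zero hq hq.le n)]

lemma exists_norm_qExpInvCoeff_le (hq : ‖q‖ < 1) : ∃ C, ∀ n, ‖qExpInvCoeff q n‖ ≤ C := by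
  obtain ⟨C, hC⟩ := exists_norm_inv_qPoch_le hq hq
  refine ⟨C, fun n ↦ ?_⟩
  rw [qExpInvCoeff, norm_mul, norm_mul, norm_pow, norm_neg, norm_one, one_pow, one_mul, norm_pow]
  exact (mul_le_of_le_one_left (norm_nonneg _) (pow_le_one₀ (norm_nonneg q) hq.le)).trans (hC n)

lemma qExp_mul_eq_one_sub_mul (hq : ‖q‖ < 1) (hz : ‖z‖ < 1) :
    qExp q (z * q) = (1 - z) * qExp q z := by
  obtain ⟨C, hC⟩ := exists_norm_inv_qPoch_le hq hq
  have h := tsum_mul_pow_sub_tsum_mul_pow_mul hC hz hq.le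
  simp only [qPoch_succ_inv_mul hq] at h
  rw [qExp, qExp]
  linear_combination -h

lemma qExpInv_eq_one_sub_mul (hq : ‖q‖ < 1) (hz : ‖z‖ < 1) :
    qExpInv q z = (1 - z) * qExpInv q (z * q) := by
  obtain ⟨C, hC⟩ := exists_norm_qExpInvCoeff_le hq
  have h := tsum_mul_pow_sub_tsum_mul_pow_mul hC hz hq.le
  have hterm : ∀ n : ℕ, qExpInvCoeff q (n + 1) * (1 - q ^ (n + 1)) * z ^ n =
      -(qExpInvCoeff q n * (z * q) ^ n) := fun n ↦ by
    rw [qExpInvCoeff_succ_mul hq]; ring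
  rw [tsum_congr hterm, tsum_neg] at h
  rw [qExpInv, qExpInv]
  linear_combination h

lemma qExp_mul_pow_eq (hq : ‖q‖ < 1) (hz : ‖z‖ < 1) (n : ℕ) :
    qExp q (z * q ^ n) = qPoch z q n * qExp q z := by
  induction n with
  | zero => simp [qPoch]
  | succ n ih =>
    rw [pow_succ, ← mul_assoc, qExp_mul_eq_one_sub_mul hq (norm_mul_pow_lt_one hz hq.le n), ih,
      qPoch]
    ring

lemma qExpInv_eq_qPoch_mul (hq : ‖q‖ < 1) (hz : ‖z‖ < 1) (n : ℕ) :
    qExpInv q z = qPoch z q n * qExpInv q (z * q ^ n) := by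
  induction n with
  | zero => simp [qPoch]
  | succ n ih =>
    rw [ih, qExpInv_eq_one_sub_mul hq (norm_mul_pow_lt_one hz hq.le n), qPoch, pow_succ,
      mul_assoc z]
    ring

theorem qExp_eq_inv_qPochInf (hq : ‖q‖ < 1) (hz : ‖z‖ < 1) : qExp q z = (qPochInf z q)⁻¹ := by
  obtain ⟨C, hC⟩ := exists_norm_inv_qPoch_le hq hq
  have hlim : Tendsto (fun j ↦ qExp q (z * q ^ j)) atTop (𝓝 (qPoch q q 0)⁻¹) :=
    tendsto_tsum_mul_mul_pow_pow hC hz hq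
  simp only [qExp_mul_pow_eq hq hz, qPoch, inv_one] at hlim
  exact eq_inv_of_mul_eq_one_right
    (tendsto_nhds_unique ((tendsto_qPoch z hq).mul_const _) hlim)

theorem qExpInv_eq_qPochInf (hq : ‖q‖ < 1) (hz : ‖z‖ < 1) : qExpInv q z = qPochInf z q := by
  obtain ⟨C, hC⟩ := exists_norm_qExpInvCoeff_le hq
  have hlim : Tendsto (fun j ↦ qExpInv q (z * q ^ j)) atTop (𝓝 (qExpInvCoeff q 0)) :=
    tendsto_tsum_mul_mul_pow_pow hC hz hq
  have h := (tendsto_qPoch z hq).mul hlim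
  simp only [← qExpInv_eq_qPoch_mul hq hz, qExpInvCoeff, zero_mul, Nat.zero_div, pow_zero,
    qPoch, inv_one, mul_one] at h
  exact tendsto_nhds_unique tendsto_const_nhds h

lemma inv_qPoch_mul_qPochInf {a : ℂ} (ha : ‖a‖ < 1) (hq : ‖q‖ < 1) (n : ℕ) :
    (qPoch a q n)⁻¹ * qPochInf a q = qExpInv q (a * q ^ n) := by
  rw [qExpInv_eq_qPochInf hq (norm_mul_pow_lt_one ha hq.le n), ← qPoch_mul_qPochInf a hq n,
    inv_mul_cancel_left₀ (qPoch_ne_zero ha hq.le n)]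

lemma tsum_inv_qPoch_mul_pow_mul_mul_pow (hq : ‖q‖ < 1) (a : ℂ) (m : ℕ) :
    ∑' l, (qPoch q q l)⁻¹ * q ^ l * (a * q ^ l) ^ m = a ^ m * qPoch q q m / qPochInf q q := by
  have hterm : ∀ l : ℕ, (qPoch q q l)⁻¹ * q ^ l * (a * q ^ l) ^ m =
      a ^ m * ((qPoch q q l)⁻¹ * (q * q ^ m) ^ l) := fun l ↦ by ring
  rw [tsum_congr hterm, tsum_mul_left, ← qExp,
    qExp_eq_inv_qPochInf hq (norm_mul_pow_lt_one hq hq.le m), ← qPoch_mul_qPochInf q hq m,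
    ← div_div, mul_div_cancel_right₀ _ (qPoch_ne_zero hq hq.le m), div_eq_mul_inv]

end Euler

lemma triangle_add_succ_mul (m k : ℕ) :
    m * (m - 1) / 2 + (k + 1) * m = m * (m + 1) / 2 + k * m := by
  have h := Nat.triangle_succ m
  rw [Nat.add_sub_cancel, mul_comm (m + 1)] at h
  linarith

theorem stmt0 (q t : ℂ) (hq : ‖q‖ < 1) (ht : ‖t‖ < 1) (k : ℕ) :
    ∑' l : ℕ, q ^ l / (qPoch q q l * qPoch (t * q) q (l + k)) =
      (1 / (qPochInf q q * qPochInf (t * q) q)) *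
        ∑' m : ℕ, (-1) ^ m * q ^ (m * (m + 1) / 2 + k * m) * t ^ m := by
  have htq : ‖t * q‖ < 1 := by simpa using norm_mul_pow_lt_one ht hq.le 1
  set a := t * q ^ (k + 1)
  let T : ℕ → ℕ → ℂ := fun l m ↦ (qPoch q q l)⁻¹ * q ^ l * (qExpInvCoeff q m * (a * q ^ l) ^ m)
  have hrow : ∀ l, q ^ l / (qPoch q q l * qPoch (t * q) q (l + k)) =
      (∑' m, T l m) / qPochInf (t * q) q := fun l ↦ by
    have h := inv_qPoch_mul_qPochInf htq hq (l + k)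
    rw [show t * q * q ^ (l + k) = a * q ^ l by ring] at h
    rw [eq_div_iff (qPochInf_ne_zero htq hq), tsum_mul_left, ← qExpInv, ← h]
    ring
  have hcol : ∀ m, ∑' l, T l m =
      (-1) ^ m * q ^ (m * (m + 1) / 2 + k * m) * t ^ m / qPochInf q q := fun m ↦ by
    rw [tsum_congr fun l ↦ (by ring : T l m =
        qExpInvCoeff q m * ((qPoch q q l)⁻¹ * q ^ l * (a * q ^ l) ^ m)), tsum_mul_left,
      tsum_inv_qPoch_mul_pow_mul_mul_pow hq, mul_div_assoc', mul_left_comm,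
      qExpInvCoeff_mul_qPoch hq, ← triangle_add_succ_mul, pow_add, mul_pow, ← pow_mul, mul_comm m]
    ring
  obtain ⟨C, hC⟩ := exists_norm_inv_qPoch_le hq hq
  obtain ⟨D, hD⟩ := exists_norm_qExpInvCoeff_le hq
  have hsum : Summable (Function.uncurry T) := (summable_mul_pow_mul_mul_pow hC hD hq ht
    fun l ↦ (norm_mul_pow_le _ hq.le l).trans (norm_mul_pow_le t hq.le (k + 1)) :)
  rw [tsum_congr hrow, tsum_div_const, ← hsum.tsum_comm, tsum_congr hcol, tsum_div_const]
  ring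
end

section
/- For nonnegative integers i ≤ l, the sum over partitions λ of length exactly l of q^{|λ|} t^{λ_i} equals t q^l / ((1-q)(1-q^2)···(1-q^{i-1}) · (1-q^i t)(1-q^{i+1}t)···(1-q^l t)). -/
/-!
Recording a partition `λ` with `l` parts by its gaps `g j = λ j - λ (j + 1)` (with `λ (l + 1) = 1`)
identifies such partitions with `ℕ ^ l`. In these coordinates `|λ| = l + ∑ j, j * g j` and
`λ i = 1 + ∑_{j ≥ i} g j`, so `q ^ |λ| * t ^ (λ i) = t q ^ l ∏ j, (q ^ j t ^ [i ≤ j]) ^ (g j)`,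
and the sum is a product of `l` geometric series.
-/

open scoped BigOperators

/-- Partitions with exactly `l` positive parts, written as weakly decreasing
tuples of positive integers. -/
def PartL (l : ℕ) : Type :=
  {f : Fin l → ℕ // (∀ i j : Fin l, i ≤ j → f j ≤ f i) ∧ ∀ i, 0 < f i}

open Finset

section ProductOfSeries

variable {β : Type*}

theorem summable_fin_prod_of_nonneg {n : ℕ} {f : Fin n → β → ℝ} (hf₀ : ∀ k b, 0 ≤ f k b)
    (hf : ∀ k, Summable (f k)) : Summable fun g : Fin n → β => ∏ k, f k (g k) := by
  induction n with
  | zero => exact (hasSum_unique _).summable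
  | succ n ih =>
    have hmul := (hf 0).mul_of_nonneg (ih (fun k => hf₀ k.succ) fun k => hf k.succ)
      (hf₀ 0) fun g => prod_nonneg fun k _ => hf₀ k.succ (g k)
    rw [← (Fin.consEquiv fun _ => β).summable_iff]
    simpa [Function.comp_def, Fin.prod_univ_succ] using hmul

theorem hasSum_fin_prod_of_summable_norm {K : Type*} [NormedCommRing K] [NormOneClass K]
    [CompleteSpace K] {n : ℕ} {f : Fin n → β → K} (hf : ∀ k, Summable fun b => ‖f k b‖) :
    HasSum (fun g : Fin n → β => ∏ k, f k (g k)) (∏ k, ∑' b, f k b) := by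
  induction n with
  | zero => simp
  | succ n ih =>
    have htail : Summable fun g : Fin n → β => ‖∏ k : Fin n, f k.succ (g k)‖ :=
      (summable_fin_prod_of_nonneg (fun k b => norm_nonneg (f k.succ b))
        fun k => hf k.succ).of_nonneg_of_le (fun _ => norm_nonneg _) fun g => norm_prod_le _ _
    have hsummable := summable_mul_of_summable_norm (R := K) (hf 0) htail
    have hmul := (hf 0).of_norm.hasSum.mul (ih fun k => hf k.succ) hsummable
    rw [← (Fin.consEquiv fun _ => β).hasSum_iff, Fin.prod_univ_succ]
    simpa [Function.comp_def, Fin.prod_univ_succ] using hmul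

theorem hasSum_fin_prod_geometric {K : Type*} [NormedField K] [CompleteSpace K] {n : ℕ}
    {c : Fin n → K} (hc : ∀ k, ‖c k‖ < 1) :
    HasSum (fun g : Fin n → ℕ => ∏ k, c k ^ g k) (∏ k, (1 - c k)⁻¹) := by
  have := hasSum_fin_prod_of_summable_norm (f := fun k m => c k ^ m) fun k => by
    simpa only [norm_pow] using summable_geometric_of_lt_one (norm_nonneg _) (hc k)
  rwa [prod_congr rfl fun k _ => tsum_geometric_of_norm_lt_one (hc k)] at this

end ProductOfSeries

namespace PartL

variable {l : ℕ}

-- `g j` is the gap between the `j`-th part and the next one, the last part counting its excess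
-- over `1`.
def ofGaps (g : Fin l → ℕ) (j : Fin l) : ℕ := 1 + ∑ k ∈ Ici j, g k

def nextPart (p : Fin l → ℕ) (j : Fin l) : ℕ := if h : j.1 + 1 < l then p ⟨j.1 + 1, h⟩ else 1

def gaps (p : Fin l → ℕ) (j : Fin l) : ℕ := p j - nextPart p j

theorem ofGaps_eq_add_nextPart (g : Fin l → ℕ) (j : Fin l) :
    ofGaps g j = g j + nextPart (ofGaps g) j := by
  unfold nextPart ofGaps
  split_ifs with h
  · have : Ici j = insert j (Ici ⟨j.1 + 1, h⟩) := by
      ext k; simp only [mem_Ici, mem_insert, Fin.le_def, Fin.ext_iff]; omega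
    rw [this, sum_insert (by simp [Fin.le_def])]
    omega
  · have : Ici j = {j} := by
      ext k; simp only [mem_Ici, mem_singleton, Fin.le_def, Fin.ext_iff]; omega
    rw [this, sum_singleton]
    omega

theorem nextPart_le (p : PartL l) (j : Fin l) : nextPart p.1 j ≤ p.1 j := by
  unfold nextPart
  split_ifs
  · exact p.2.1 _ _ (by simp [Fin.le_def])
  · exact p.2.2 j

theorem gaps_ofGaps (g : Fin l → ℕ) : gaps (ofGaps g) = g := by
  funext j
  rw [gaps, ofGaps_eq_add_nextPart g j, Nat.add_sub_cancel]

theorem ofGaps_gaps (p : PartL l) (j : Fin l) : ofGaps (gaps p.1) j = p.1 j := by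
  have hnext : nextPart (ofGaps (gaps p.1)) j = nextPart p.1 j := by
    unfold nextPart
    split_ifs with h
    · exact ofGaps_gaps p ⟨j.1 + 1, h⟩
    · rfl
  rw [ofGaps_eq_add_nextPart, hnext, gaps, Nat.sub_add_cancel (nextPart_le p j)]
termination_by l - j.1

def gapsEquiv : (Fin l → ℕ) ≃ PartL l where
  toFun g := ⟨ofGaps g, fun _ _ hab => Nat.add_le_add_left (sum_le_sum_of_subset
    (Ici_subset_Ici.mpr hab)) 1, fun _ => Nat.lt_add_right _ Nat.one_pos⟩
  invFun p := gaps p.1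
  left_inv := gaps_ofGaps
  right_inv p := Subtype.ext (funext (ofGaps_gaps p))

theorem sum_ofGaps (g : Fin l → ℕ) : ∑ j, ofGaps g j = l + ∑ k : Fin l, (k.1 + 1) * g k := by
  simp only [ofGaps, sum_add_distrib, sum_const, card_univ, Fintype.card_fin, smul_eq_mul, mul_one]
  rw [sum_comm' (t' := univ) (s' := Iic) (by simp)]
  simp [Fin.card_Iic]

end PartL

-- Indices are 0-based: gap `k` and part `a` are the header's gap `k + 1` and part `i = a + 1`.
def gapFactor {M : Type*} [Monoid M] {l : ℕ} (q t : M) (a k : Fin l) : M :=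
  q ^ (k.1 + 1) * if a ≤ k then t else 1

theorem pow_sum_ofGaps_mul_pow {M : Type*} [CommMonoid M] {l : ℕ} (q t : M) (a : Fin l)
    (g : Fin l → ℕ) :
    q ^ (∑ j, PartL.ofGaps g j) * t ^ PartL.ofGaps g a =
      t * q ^ l * ∏ k, gapFactor q t a k ^ g k := by
  have hq : q ^ (∑ k : Fin l, (k.1 + 1) * g k) = ∏ k : Fin l, (q ^ (k.1 + 1)) ^ g k := by
    simp only [← pow_mul, prod_pow_eq_pow_sum]
  have ht : t ^ (∑ k ∈ Ici a, g k) = ∏ k : Fin l, (if a ≤ k then t else 1) ^ g k := by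
    rw [← prod_pow_eq_pow_sum, ← filter_le_eq_Ici, prod_filter]
    exact prod_congr rfl fun k _ => by split_ifs <;> simp
  rw [PartL.sum_ofGaps, PartL.ofGaps, pow_add, pow_add, pow_one, hq, ht]
  simp only [gapFactor, mul_pow, prod_mul_distrib]
  ac_rfl

theorem prod_one_sub_gapFactor {R : Type*} [CommRing R] {l : ℕ} (q t : R) (a : Fin l) :
    ∏ k, (1 - gapFactor q t a k) =
      (∏ j ∈ range a, (1 - q ^ (j + 1))) * ∏ j ∈ Icc (a.1 + 1) l, (1 - q ^ j * t) := by
  simp only [gapFactor, Fin.le_def]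
  rw [← Ico_add_one_right_eq_Icc, ← prod_Ico_add' (fun j => 1 - q ^ j * t),
    Fin.prod_univ_eq_prod_range (fun k => 1 - q ^ (k + 1) * if a.1 ≤ k then t else 1),
    ← prod_range_mul_prod_Ico _ a.2.le]
  congr 1
  · refine prod_congr rfl fun j hj => ?_
    rw [if_neg (by simp at hj; omega), mul_one]
  · refine prod_congr rfl fun j hj => ?_
    rw [if_pos (by simp at hj; omega)]

theorem norm_gapFactor_lt_one {K : Type*} [NormedField K] {l : ℕ} {q t : K} (hq : ‖q‖ < 1)
    (ht : ‖t‖ ≤ 1) (a k : Fin l) : ‖gapFactor q t a k‖ < 1 := by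
  rw [gapFactor, norm_mul, norm_pow]
  have hite : ‖if a ≤ k then t else 1‖ ≤ 1 := by split_ifs <;> simp [ht]
  calc ‖q‖ ^ (k.1 + 1) * ‖if a ≤ k then t else 1‖ ≤ ‖q‖ ^ (k.1 + 1) :=
        mul_le_of_le_one_right (by positivity) hite
    _ < 1 := pow_lt_one₀ (norm_nonneg q) hq (Nat.succ_ne_zero _)

theorem stmt5 (q t : ℂ) (hq : ‖q‖ < 1) (ht : ‖t‖ < 1) (i l : ℕ)
    (hi : 1 ≤ i) (hil : i ≤ l) :
    ∑' p : PartL l, q ^ (∑ j, p.1 j) * t ^ (p.1 ⟨i - 1, by omega⟩) =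
      t * q ^ l /
        ((∏ j ∈ Finset.range (i - 1), (1 - q ^ (j + 1))) *
          ∏ j ∈ Finset.Icc i l, (1 - q ^ j * t)) := by
  set a : Fin l := ⟨i - 1, by omega⟩
  have hgeom := hasSum_fin_prod_geometric (norm_gapFactor_lt_one hq ht.le a)
  have ha : a.1 + 1 = i := by simp only [a]; omega
  calc ∑' p : PartL l, q ^ (∑ j, p.1 j) * t ^ p.1 a
      = ∑' g, q ^ (∑ j, PartL.ofGaps g j) * t ^ PartL.ofGaps g a :=
        (PartL.gapsEquiv.tsum_eq fun p : PartL l => q ^ (∑ j, p.1 j) * t ^ p.1 a).symm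
    _ = ∑' g : Fin l → ℕ, t * q ^ l * ∏ k, gapFactor q t a k ^ g k := by
        simp only [pow_sum_ofGaps_mul_pow]
    _ = t * q ^ l * ∏ k, (1 - gapFactor q t a k)⁻¹ := by rw [tsum_mul_left, hgeom.tsum_eq]
    _ = _ := by rw [prod_inv_distrib, prod_one_sub_gapFactor, ha, div_eq_mul_inv]
end

section
/- The coefficient of z^k (k ≥ 0) in the expansion of (z - z^{-1}) · (1/(q;q)_∞²) Σ_{r∈Z} Σ_{m≥0} z^r (-1)^m q^{m(m+1)/2} q^{|r|(m+1/2)} equals, for k ≥ 1, (1/(q;q)_∞²) Σ_{m≥0} (-1)^m q^{m(m+1)/2} ( q^{(k-1)(m+1/2)} − q^{(k+1)(m+1/2)} ); equivalently, the q-dimension of the level −1 irreducible d_∞-module of highest weight Λ(k), k ∈ Z_+, is (1/(q;q)_∞²) Σ_{m≥0} (-1)^m q^{m(m+1)/2} ( q^{k(m+1/2)} − q^{(k+2)(m+1/2)} ). -/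
open scoped BigOperators

/-- With `q = Q²`: `A_k = (1/(q;q)_∞²) Σ_{m≥0} (-1)^m q^{m(m+1)/2 + k(m+1/2)}`. -/
noncomputable def Acoef (Q : ℂ) (k : ℕ) : ℂ :=
  (1 / (qPochInf (Q ^ 2) (Q ^ 2)) ^ 2) *
    ∑' m : ℕ, (-1) ^ m * Q ^ (m * (m + 1) + k * (2 * m + 1))

/-!
Put `F(w) = Σ_{n≥0} wⁿ A_n`. The bilateral series is `F(z) + F(z⁻¹) - A_0`, while shifting the
index by two gives `Σ_{k≥0} w^{k+1} (A_k - A_{k+2}) = (w - w⁻¹) F(w) + w⁻¹ A_0 + A_1`; taking the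
difference of the cases `w = z` and `w = z⁻¹` is the claim. Both one-sided series
converge because `A_k = O(|Q|^k)`.
-/

section IndexShift

variable {K : Type*} [Field K] [TopologicalSpace K] [IsTopologicalRing K] {a : ℕ → K} {f g : K}

theorem HasSum.zpow_mul_natAbs {z : K} (hf : HasSum (fun n : ℕ => z ^ n * a n) f)
    (hg : HasSum (fun n : ℕ => z⁻¹ ^ n * a n) g) :
    HasSum (fun r : ℤ => z ^ r * a r.natAbs) (f + g - a 0) := by
  simpa using HasSum.of_nat_of_neg (f := fun r : ℤ => z ^ r * a r.natAbs)
    (by simpa using hf) (by simpa using hg)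

theorem HasSum.pow_succ_mul_sub_shift_two {w : K} (hw : w ≠ 0)
    (h : HasSum (fun n : ℕ => w ^ n * a n) f) :
    HasSum (fun k : ℕ => w ^ (k + 1) * (a k - a (k + 2)))
      ((w - w⁻¹) * f + w⁻¹ * a 0 + a 1) := by
  have hshift : HasSum (fun k : ℕ => w ^ (k + 1) * a (k + 2)) (w⁻¹ * (f - a 0 - w * a 1)) := by
    have h₂ := ((hasSum_nat_add_iff' 2).mpr h).mul_left w⁻¹
    rw [Finset.sum_range_succ, Finset.sum_range_one, sub_add_eq_sub_sub] at h₂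
    simp only [pow_zero, one_mul, pow_one] at h₂
    exact h₂.congr_fun fun k => by field_simp; ring
  have hvalue : (w - w⁻¹) * f + w⁻¹ * a 0 + a 1 = w * f - w⁻¹ * (f - a 0 - w * a 1) := by
    field_simp
    ring
  rw [hvalue]
  exact ((h.mul_left w).sub hshift).congr_fun fun k => by ring

theorem HasSum.sub_inv_mul_zpow_mul_natAbs {z : K} (hz : z ≠ 0)
    (hf : HasSum (fun n : ℕ => z ^ n * a n) f) (hg : HasSum (fun n : ℕ => z⁻¹ ^ n * a n) g) :
    HasSum (fun k : ℕ => (z ^ (k + 1) - z⁻¹ ^ (k + 1)) * (a k - a (k + 2)))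
      ((z - z⁻¹) * (f + g - a 0)) := by
  have h := (hf.pow_succ_mul_sub_shift_two hz).sub (hg.pow_succ_mul_sub_shift_two (inv_ne_zero hz))
  rw [inv_inv] at h
  rw [show (z - z⁻¹) * (f + g - a 0) =
      (z - z⁻¹) * f + z⁻¹ * a 0 + a 1 - ((z⁻¹ - z) * g + z * a 0 + a 1) by ring]
  exact h.congr_fun fun k => sub_mul _ _ _

end IndexShift

section Acoef

variable {Q : ℂ}

lemma norm_tsum_Acoef_series_le (hQ : ‖Q‖ < 1) (k : ℕ) :
    ‖∑' m : ℕ, (-1 : ℂ) ^ m * Q ^ (m * (m + 1) + k * (2 * m + 1))‖ ≤ ‖Q‖ ^ k * (1 - ‖Q‖)⁻¹ := by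
  refine tsum_of_norm_bounded
    ((hasSum_geometric_of_lt_one (norm_nonneg Q) hQ).mul_left (‖Q‖ ^ k)) fun m => ?_
  rw [norm_mul, norm_pow, norm_pow, norm_neg, norm_one, one_pow, one_mul, ← pow_add]
  exact pow_le_pow_of_le_one (norm_nonneg Q) hQ.le (by nlinarith)

lemma summable_pow_mul_Acoef (hQ : ‖Q‖ < 1) {w : ℂ} (hw : ‖w * Q‖ < 1) :
    Summable fun n : ℕ => w ^ n * Acoef Q n := by
  set c := ‖1 / qPochInf (Q ^ 2) (Q ^ 2) ^ 2‖
  refine Summable.of_norm_bounded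
    ((summable_geometric_of_lt_one (norm_nonneg _) hw).mul_left (c * (1 - ‖Q‖)⁻¹)) fun n => ?_
  calc ‖w ^ n * Acoef Q n‖
      = ‖w‖ ^ n * (c * ‖∑' m : ℕ, (-1 : ℂ) ^ m * Q ^ (m * (m + 1) + n * (2 * m + 1))‖) := by
        rw [Acoef, norm_mul, norm_mul, norm_pow]
    _ ≤ ‖w‖ ^ n * (c * (‖Q‖ ^ n * (1 - ‖Q‖)⁻¹)) := by
        gcongr
        exact norm_tsum_Acoef_series_le hQ n
    _ = c * (1 - ‖Q‖)⁻¹ * ‖w * Q‖ ^ n := by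
        rw [norm_mul, mul_pow]
        ring

end Acoef

/-- Comparing the coefficients of `z^{k+1}` in
`(z - z⁻¹) Σ_{r∈ℤ} z^r A_{|r|}` shows that the `q`-dimension of the level `-1`
irreducible `d_∞`-module of highest weight `Λ(k)` is `A_k - A_{k+2}`. -/
theorem stmt10 (Q z : ℂ) (hQ : ‖Q‖ < 1) (hz0 : z ≠ 0)
    (hz1 : ‖Q‖ < ‖z‖) (hz2 : ‖z * Q‖ < 1) :
    (z - z⁻¹) * ∑' r : ℤ, z ^ r * Acoef Q r.natAbs =
      ∑' k : ℕ, (z ^ (k + 1) - z⁻¹ ^ (k + 1)) * (Acoef Q k - Acoef Q (k + 2)) := by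
  have hzinv : ‖z⁻¹ * Q‖ < 1 := by
    rwa [norm_mul, norm_inv, inv_mul_lt_one₀ (norm_pos_iff.mpr hz0)]
  have hf := (summable_pow_mul_Acoef hQ hz2).hasSum
  have hg := (summable_pow_mul_Acoef hQ hzinv).hasSum
  rw [(hf.zpow_mul_natAbs hg).tsum_eq, (hf.sub_inv_mul_zpow_mul_natAbs hz0 hg).tsum_eq]
end
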